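/- arXiv:2208.05761 — 6 statements merged into one kernel-verified Lean document; each statement's English description precedes it below -/
import Mathlib

section
/- Let G be a nontrivial finite group and Y a subset of G. Then the expected waiting time e(G,Y) = sum over n ≥ 0 of P(τ_{G,Y} > n) equals -∑_{Y ⊆ H < G} μ_G(H)·|G|/(|G|-|H|), where μ_G is the Möbius function of the subgroup lattice of G (μ_G(G)=1 and μ_G(H) = -∑_{H < K ≤ G} μ_G(K)) and the sum runs over proper subgroups H of G containing Y. -/
open Subgroup Finset

/-- Probability that `n` uniformly random elements of `G` together with `Y` generate `G`. -/
noncomputable def genProb (G : Type*) [Group G] (Y : Set G) (n : ℕ) : ℝ :=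
  (Nat.card {v : Fin n → G // Subgroup.closure (Y ∪ Set.range v) = ⊤} : ℝ) /
    (Nat.card G : ℝ) ^ n

/-- Expected waiting time `e(G,Y) = ∑_{n ≥ 0} (1 - P_{G,Y}(n))`. -/
noncomputable def eTime (G : Type*) [Group G] (Y : Set G) : ℝ :=
  ∑' n : ℕ, (1 - genProb G Y n)

/-- Möbius formula for the expected waiting time: if `μ` is the Möbius function of the
subgroup lattice of the nontrivial finite group `G` (i.e. `μ(G) = 1` and
`μ(H) = -∑_{H < K ≤ G} μ(K)` for proper subgroups `H`), then
`e(G,Y) = -∑_{Y ⊆ H < G} μ(H)·|G|/(|G| - |H|)`. -/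
theorem stmt0 (G : Type*) [Group G] [Finite G] [Nontrivial G] (Y : Set G)
    (μ : Subgroup G → ℤ) (hμtop : μ ⊤ = 1)
    (hμ : ∀ H : Subgroup G, H < ⊤ → μ H = -∑ᶠ K ∈ {K : Subgroup G | H < K}, μ K) :
    eTime G Y =
      -∑ᶠ H ∈ {H : Subgroup G | Y ⊆ (H : Set G) ∧ H < ⊤},
        (μ H : ℝ) * (Nat.card G : ℝ) / ((Nat.card G : ℝ) - (Nat.card H : ℝ)) := by
  classical
  letI : Fintype G := Fintype.ofFinite G
  letI : Fintype (Subgroup G) := Fintype.ofFinite _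
  have hg0 : 0 < (Nat.card G : ℝ) := by
    exact_mod_cast Nat.card_pos
  -- proper subgroups have strictly smaller cardinality
  have hcard_lt : ∀ K : Subgroup G, K < ⊤ → Nat.card K < Nat.card G := by
    intro K hK
    refine lt_of_le_of_ne ?_ (fun h => hK.ne (Subgroup.eq_top_of_card_eq K h))
    exact Nat.card_le_card_of_injective _ K.subtype_injective
  -- Step 1 : delta function
  have step1 : ∀ L : Subgroup G,
      (∑ K ∈ univ.filter (fun K => L ≤ K), μ K) = if L = ⊤ then 1 else 0 := by
    intro L
    by_cases hL : L = ⊤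
    · subst hL
      have : univ.filter (fun K : Subgroup G => ⊤ ≤ K) = {⊤} := by
        ext K; simp [top_le_iff, eq_comm]
      rw [this, Finset.sum_singleton, hμtop, if_pos rfl]
    · have hL' : L < ⊤ := lt_top_iff_ne_top.mpr hL
      have hrec := hμ L hL'
      have hset : {K : Subgroup G | L < K} = ↑(univ.filter (fun K => L < K)) := by
        ext K; simp
      rw [hset, finsum_mem_coe_finset] at hrec
      have hsplit : univ.filter (fun K : Subgroup G => L ≤ K)
          = insert L (univ.filter (fun K => L < K)) := by
        ext K
        simp only [Finset.mem_filter, Finset.mem_univ, true_and, Finset.mem_insert]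
        constructor
        · intro h
          rcases eq_or_lt_of_le h with h | h
          · exact Or.inl h.symm
          · exact Or.inr h
        · rintro (rfl | h)
          · exact le_rfl
          · exact h.le
      rw [hsplit, Finset.sum_insert (by simp), hrec, if_neg hL]
      ring
  -- counting functions into a subgroup
  have hcount : ∀ (n : ℕ) (K : Subgroup G),
      (univ.filter (fun v : Fin n → G => ∀ i, v i ∈ K)).card = Nat.card K ^ n := by
    intro n K
    rw [← Fintype.card_subtype]
    have e : (Fin n → K) ≃ {v : Fin n → G // ∀ i, v i ∈ K} :=
      { toFun := fun f => ⟨fun i => f i, fun i => (f i).2⟩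
        invFun := fun g => fun i => ⟨g.1 i, g.2 i⟩
        left_inv := fun f => rfl
        right_inv := fun g => rfl }
    rw [← Fintype.card_congr e, Fintype.card_fun, Fintype.card_fin,
      Nat.card_eq_fintype_card]
  -- Step 2 : counting generating tuples
  have step2 : ∀ n : ℕ,
      (Nat.card {v : Fin n → G // Subgroup.closure (Y ∪ Set.range v) = ⊤} : ℤ)
        = ∑ K ∈ univ.filter (fun K : Subgroup G => Y ⊆ (K : Set G)),
            μ K * (Nat.card K : ℤ) ^ n := by
    intro n
    rw [Nat.card_eq_fintype_card, Fintype.card_subtype]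
    push_cast [Finset.card_filter]
    calc (∑ v : Fin n → G, if Subgroup.closure (Y ∪ Set.range v) = ⊤ then (1 : ℤ) else 0)
        = ∑ v : Fin n → G, ∑ K ∈ univ.filter
            (fun K => Subgroup.closure (Y ∪ Set.range v) ≤ K), μ K := by
          refine Finset.sum_congr rfl fun v _ => ?_
          rw [step1]
      _ = ∑ v : Fin n → G, ∑ K : Subgroup G,
            if Y ⊆ (K : Set G) ∧ ∀ i, v i ∈ K then μ K else 0 := by
          refine Finset.sum_congr rfl fun v _ => ?_
          rw [Finset.sum_filter]
          refine Finset.sum_congr rfl fun K _ => ?_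
          have h : Subgroup.closure (Y ∪ Set.range v) ≤ K
              ↔ Y ⊆ (K : Set G) ∧ ∀ i, v i ∈ K := by
            rw [Subgroup.closure_le, Set.union_subset_iff, Set.range_subset_iff]
            simp [SetLike.mem_coe]
          simp only [h]
      _ = ∑ K : Subgroup G, ∑ v : Fin n → G,
            if Y ⊆ (K : Set G) ∧ ∀ i, v i ∈ K then μ K else 0 := Finset.sum_comm
      _ = ∑ K ∈ univ.filter (fun K : Subgroup G => Y ⊆ (K : Set G)),
            μ K * (Nat.card K : ℤ) ^ n := by
          rw [Finset.sum_filter]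
          refine Finset.sum_congr rfl fun K _ => ?_
          by_cases hY : Y ⊆ (K : Set G)
          · simp only [hY, true_and, if_true]
            rw [← Finset.sum_filter, Finset.sum_const, hcount, nsmul_eq_mul]
            push_cast
            ring
          · simp [hY]
  set g : ℝ := (Nat.card G : ℝ) with hg
  set SY := univ.filter (fun K : Subgroup G => Y ⊆ (K : Set G)) with hSY
  set S := univ.filter (fun K : Subgroup G => Y ⊆ (K : Set G) ∧ K < ⊤) with hS
  have htopS : (⊤ : Subgroup G) ∉ S := by simp [hS]
  have hSYins : SY = insert ⊤ S := by
    ext K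
    simp only [hSY, hS, Finset.mem_filter, Finset.mem_univ, true_and, Finset.mem_insert]
    constructor
    · intro h
      rcases eq_or_lt_of_le (le_top : K ≤ ⊤) with h' | h'
      · exact Or.inl h'
      · exact Or.inr ⟨h, h'⟩
    · rintro (rfl | ⟨h, -⟩)
      · exact fun x _ => trivial
      · exact h
  -- Step 3 : formula for genProb
  have step3 : ∀ n : ℕ, genProb G Y n
      = ∑ K ∈ SY, (μ K : ℝ) * ((Nat.card K : ℝ) / g) ^ n := by
    intro n
    unfold genProb
    have h2 := step2 n
    have : (Nat.card {v : Fin n → G // Subgroup.closure (Y ∪ Set.range v) = ⊤} : ℝ)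
        = ∑ K ∈ SY, (μ K : ℝ) * (Nat.card K : ℝ) ^ n := by
      exact_mod_cast congrArg (fun z : ℤ => (z : ℝ)) h2
    rw [this, Finset.sum_div]
    refine Finset.sum_congr rfl fun K _ => ?_
    rw [div_pow, mul_div_assoc]
  -- Step 4
  have step4 : ∀ n : ℕ, 1 - genProb G Y n
      = ∑ K ∈ S, (-(μ K : ℝ)) * ((Nat.card K : ℝ) / g) ^ n := by
    intro n
    rw [step3 n, hSYins, Finset.sum_insert htopS]
    have : (μ (⊤ : Subgroup G) : ℝ) * ((Nat.card (⊤ : Subgroup G) : ℝ) / g) ^ n = 1 := by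
      rw [hμtop]
      have : (Nat.card (⊤ : Subgroup G) : ℝ) = g := by
        rw [hg]
        norm_cast
        exact Nat.card_congr Subgroup.topEquiv.toEquiv
      rw [this, div_self hg0.ne', one_pow]
      norm_num
    rw [this]
    simp only [neg_mul]
    rw [Finset.sum_neg_distrib]
    ring
  -- summability / geometric data
  have hr : ∀ K ∈ S, 0 ≤ (Nat.card K : ℝ) / g ∧ (Nat.card K : ℝ) / g < 1 := by
    intro K hK
    have hKlt : K < ⊤ := (Finset.mem_filter.mp hK).2.2
    constructor
    · positivity
    · rw [div_lt_one hg0, hg]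
      exact_mod_cast hcard_lt K hKlt
  -- Step 5 : compute the tsum
  have step5 : eTime G Y = ∑ K ∈ S, (-(μ K : ℝ)) * (1 - (Nat.card K : ℝ) / g)⁻¹ := by
    unfold eTime
    rw [tsum_congr step4, Summable.tsum_finsetSum]
    · refine Finset.sum_congr rfl fun K hK => ?_
      obtain ⟨h0, h1⟩ := hr K hK
      rw [tsum_mul_left, tsum_geometric_of_lt_one h0 h1]
    · intro K hK
      obtain ⟨h0, h1⟩ := hr K hK
      exact (summable_geometric_of_lt_one h0 h1).mul_left _
  rw [step5]
  have hsetS : {H : Subgroup G | Y ⊆ (H : Set G) ∧ H < ⊤} = ↑S := by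
    ext H; simp [hS]
  rw [hsetS, finsum_mem_coe_finset, ← Finset.sum_neg_distrib]
  refine Finset.sum_congr rfl fun K hK => ?_
  have hKlt : K < ⊤ := (Finset.mem_filter.mp hK).2.2
  have hk : (Nat.card K : ℝ) < g := by rw [hg]; exact_mod_cast hcard_lt K hKlt
  have h1 : g - (Nat.card K : ℝ) ≠ 0 := sub_ne_zero.mpr hk.ne'
  have h2 : (1 : ℝ) - (Nat.card K : ℝ) / g ≠ 0 := by
    have : (0:ℝ) < 1 - (Nat.card K : ℝ) / g := by
      rw [sub_pos, div_lt_one hg0]; exact hk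
    exact this.ne'
  field_simp
end

section
/- For any finite group G and any element g ∈ G, e(G,g) ≤ e(G), with equality if and only if g belongs to the Frattini subgroup of G. -/
open Subgroup

/-- The Frattini subgroup: intersection of the maximal subgroups. -/
noncomputable def frattiniSub (G : Type*) [Group G] : Subgroup G :=
  ⨅ M ∈ {M : Subgroup G | IsCoatom M}, M

/-!
Adding elements to `Y` only enlarges the set of tuples that generate `G` together with `Y`, so
`e(G,Y) ≤ e(G)` term by term. Both series converge: a non-generating tuple lies in some maximal
subgroup, and a maximal subgroup has index at least `2`, so the tail terms decay like `2⁻ⁿ`.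
Elements of the Frattini subgroup are non-generators, which gives equality. Conversely, if some
`y ∈ Y` avoids a maximal subgroup `M`, a tuple enumerating `M` generates `G` together with `Y`
but not alone, so one term of the series is strictly smaller.
-/

namespace GenerationTime

variable {G : Type*} [Group G]

def generatingTuples (G : Type*) [Group G] (Y : Set G) (n : ℕ) : Set (Fin n → G) :=
  {v | closure (Y ∪ Set.range v) = ⊤}

theorem frattiniSub_eq_frattini : frattiniSub G = frattini G := rfl

theorem generatingTuples_mono {Y Z : Set G} (h : Y ⊆ Z) (n : ℕ) :
    generatingTuples G Y n ⊆ generatingTuples G Z n := fun _ hv =>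
  top_unique (hv.symm.trans_le (closure_mono (Set.union_subset_union_left _ h)))

theorem closure_union_eq_top_iff_of_subset_frattini [IsCoatomic (Subgroup G)] {Y S : Set G}
    (hY : Y ⊆ frattini G) : closure (Y ∪ S) = ⊤ ↔ closure S = ⊤ := by
  refine ⟨fun h => frattini_nongenerating (top_unique ?_), fun h => ?_⟩
  · rw [← h, Subgroup.closure_union, sup_comm]
    exact sup_le_sup_left ((closure_le _).2 hY) _
  · exact top_unique (h.symm.trans_le (closure_mono Set.subset_union_right))

theorem generatingTuples_eq_of_subset_frattini [IsCoatomic (Subgroup G)] {Y : Set G}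
    (hY : Y ⊆ frattini G) (n : ℕ) : generatingTuples G Y n = generatingTuples G ∅ n := by
  ext v
  simp only [generatingTuples, Set.mem_ofPred_eq, Set.empty_union,
    closure_union_eq_top_iff_of_subset_frattini hY]

theorem compl_generatingTuples_subset [IsCoatomic (Subgroup G)] (Y : Set G) (n : ℕ) :
    (generatingTuples G Y n)ᶜ ⊆ ⋃ M : {M : Subgroup G // IsCoatom M}, Set.univ.pi fun _ => M := by
  intro v hv
  obtain ⟨M, hM, hle⟩ := (eq_top_or_exists_le_coatom (closure (Y ∪ Set.range v))).resolve_left hv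
  exact Set.mem_iUnion.2 ⟨⟨M, hM⟩, fun i _ =>
    hle (subset_closure (Set.mem_union_right _ (Set.mem_range_self i)))⟩

theorem genProb_eq_ncard (Y : Set G) (n : ℕ) :
    genProb G Y n = (generatingTuples G Y n).ncard / (Nat.card G : ℝ) ^ n := by
  rw [genProb, ← Nat.card_coe_set_eq]
  rfl

variable [Finite G]

theorem two_mul_card_le_of_isCoatom {M : Subgroup G} (hM : IsCoatom M) :
    2 * Nat.card M ≤ Nat.card G := by
  rw [← M.index_mul_card]
  exact Nat.mul_le_mul_right _ (one_lt_index_of_ne_top hM.1)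

theorem ncard_pi_le_of_isCoatom {M : Subgroup G} (hM : IsCoatom M) (n : ℕ) :
    ((Set.univ.pi fun _ : Fin n => (M : Set G)).ncard : ℝ) ≤ (Nat.card G / 2 : ℝ) ^ n := by
  rw [← Nat.card_coe_set_eq, Nat.card_congr (Equiv.Set.univPi _), Nat.card_fun, Nat.card_fin]
  push_cast
  gcongr
  rw [le_div_iff₀ two_pos]
  exact_mod_cast (mul_comm _ _).trans_le (two_mul_card_le_of_isCoatom hM)

theorem card_pow_pos (n : ℕ) : (0 : ℝ) < (Nat.card G : ℝ) ^ n := by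
  have : 0 < Nat.card G := Nat.card_pos
  positivity

theorem one_sub_genProb_eq (Y : Set G) (n : ℕ) :
    1 - genProb G Y n = (generatingTuples G Y n)ᶜ.ncard / (Nat.card G : ℝ) ^ n := by
  have hsum := (generatingTuples G Y n).ncard_add_ncard_compl
  rw [Nat.card_fun, Nat.card_fin] at hsum
  rw [genProb_eq_ncard, eq_div_iff (card_pow_pos n).ne', sub_mul, one_mul,
    div_mul_cancel₀ _ (card_pow_pos n).ne', sub_eq_iff_eq_add']
  exact_mod_cast hsum.symm

theorem genProb_mono {Y Z : Set G} (h : Y ⊆ Z) (n : ℕ) : genProb G Y n ≤ genProb G Z n := by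
  simp only [genProb_eq_ncard]
  gcongr ?_ / _
  exact_mod_cast Set.ncard_le_ncard (generatingTuples_mono h n)

theorem genProb_le_one (Y : Set G) (n : ℕ) : genProb G Y n ≤ 1 := by
  have := (one_sub_genProb_eq Y n).symm ▸ div_nonneg (Nat.cast_nonneg _) (card_pow_pos n).le
  linarith

theorem one_sub_genProb_le (Y : Set G) (n : ℕ) :
    1 - genProb G Y n ≤ Nat.card {M : Subgroup G // IsCoatom M} * (1 / 2 : ℝ) ^ n := by
  have : Fintype {M : Subgroup G // IsCoatom M} := Fintype.ofFinite _
  rw [one_sub_genProb_eq, div_le_iff₀ (card_pow_pos n)]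
  calc ((generatingTuples G Y n)ᶜ.ncard : ℝ)
      ≤ ∑ M : {M : Subgroup G // IsCoatom M}, ((Set.univ.pi fun _ => (M : Set G)).ncard : ℝ) := by
        exact_mod_cast (Set.ncard_le_ncard (compl_generatingTuples_subset Y n)).trans
          (Set.ncard_iUnion_le_of_fintype _)
    _ ≤ ∑ _M : {M : Subgroup G // IsCoatom M}, (Nat.card G / 2 : ℝ) ^ n :=
        Finset.sum_le_sum fun M _ => ncard_pi_le_of_isCoatom M.2 n
    _ = Nat.card {M : Subgroup G // IsCoatom M} * (1 / 2 : ℝ) ^ n * (Nat.card G : ℝ) ^ n := by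
        rw [Finset.sum_const, Finset.card_univ, ← Nat.card_eq_fintype_card, nsmul_eq_mul]
        ring

theorem summable_one_sub_genProb (Y : Set G) : Summable fun n => 1 - genProb G Y n :=
  .of_nonneg_of_le (fun n => sub_nonneg.2 (genProb_le_one Y n)) (one_sub_genProb_le Y)
    ((summable_geometric_of_lt_one (by norm_num) (by norm_num)).mul_left _)

theorem eTime_anti {Y Z : Set G} (h : Y ⊆ Z) : eTime G Z ≤ eTime G Y :=
  (summable_one_sub_genProb Z).tsum_le_tsum (fun n => sub_le_sub_left (genProb_mono h n) 1)
    (summable_one_sub_genProb Y)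

theorem exists_genProb_lt_of_not_subset_coatom {Y : Set G} {M : Subgroup G} (hM : IsCoatom M)
    (hY : ¬Y ⊆ M) : ∃ n, genProb G ∅ n < genProb G Y n := by
  let v : Fin (Nat.card M) → G := Subtype.val ∘ (Finite.equivFin M).symm
  have hv : Set.range v = M := by
    rw [Set.range_comp, Equiv.range_eq_univ, Set.image_univ, Subtype.range_coe]
  have hv_gen : v ∈ generatingTuples G Y (Nat.card M) := by
    refine hM.2 _ (lt_of_le_not_ge ?_ fun hle => hY ?_)
    · calc M = closure (Set.range v) := by rw [hv, closure_eq]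
        _ ≤ _ := closure_mono Set.subset_union_right
    · exact Set.subset_union_left.trans (subset_closure.trans hle)
  have hv_not_gen : v ∉ generatingTuples G ∅ (Nat.card M) := by
    simpa [generatingTuples, hv] using hM.1
  refine ⟨Nat.card M, ?_⟩
  rw [genProb_eq_ncard, genProb_eq_ncard, div_lt_div_iff_of_pos_right (card_pow_pos _)]
  exact_mod_cast Set.ncard_lt_ncard ⟨generatingTuples_mono (Set.empty_subset Y) _,
    fun hsub => hv_not_gen (hsub hv_gen)⟩

theorem eTime_eq_eTime_empty_iff (Y : Set G) : eTime G Y = eTime G ∅ ↔ Y ⊆ frattini G := by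
  refine ⟨fun heq => ?_, fun hY => ?_⟩
  · by_contra hY
    obtain ⟨M, hM, hYM⟩ : ∃ M : Subgroup G, IsCoatom M ∧ ¬Y ⊆ M := by
      simpa [frattini, Order.radical, Set.subset_iInter_iff] using hY
    obtain ⟨n, hn⟩ := exists_genProb_lt_of_not_subset_coatom hM hYM
    exact heq.not_lt ((summable_one_sub_genProb Y).tsum_lt_tsum
      (fun k => sub_le_sub_left (genProb_mono (Set.empty_subset Y) k) 1)
      (sub_lt_sub_left hn 1) (summable_one_sub_genProb ∅))
  · simp only [eTime, genProb_eq_ncard, generatingTuples_eq_of_subset_frattini hY]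

end GenerationTime

open GenerationTime in
theorem stmt2_general (G : Type*) [Group G] [Finite G] (g : G) :
    eTime G {g} ≤ eTime G ∅ ∧ (eTime G {g} = eTime G ∅ ↔ g ∈ frattiniSub G) := by
  rw [eTime_eq_eTime_empty_iff, Set.singleton_subset_iff, frattiniSub_eq_frattini, SetLike.mem_coe]
  exact ⟨eTime_anti (Set.empty_subset _), Iff.rfl⟩

theorem stmt2 (G : Type*) [Group G] [Finite G] [Nontrivial G] (g : G) :
    eTime G {g} ≤ eTime G ∅ ∧ (eTime G {g} = eTime G ∅ ↔ g ∈ frattiniSub G) :=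
  stmt2_general G g
end

section
/- Let S be a finite nonabelian simple group, t a positive integer, and G = S^t with coordinate projections π_1, ..., π_t. Every maximal subgroup M of G is of exactly one of the following forms: (1) M = π_i^{-1}(H) for some 1 ≤ i ≤ t and some maximal subgroup H of S; (2) M = {x ∈ G : π_s(x) = α(π_r(x))} for some 1 ≤ r < s ≤ t and some automorphism α of S. -/
/-!
Let `M` be a maximal subgroup of `S^t`. If some coordinate projection `π_i` maps `M` onto a
proper subgroup `H`, then `M = π_i⁻¹(H)` and `H` is maximal. Otherwise `M` is subdirect, and
then the values at `s` of the elements of `M` that are trivial on a set `T ∌ s`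
(`coordFiber M T s`) form a normal subgroup of `S`, hence `1` or `S`. If all of them with
`|T| = 1` were `S`, commutators would let us enlarge `T` one index at a time (as `S` is
nonabelian), and `M` would be all of `S^t`. So for some `r ≠ s`, the coordinate `x s` of `x ∈ M`
is determined by `x r`; this defines an automorphism `α` of `S` with `M ≤ {x | x s = α (x r)}`,
and maximality forces equality.
-/

open Subgroup
open scoped commutatorElement

namespace Subgroup

section Coatom

variable {G H : Type*} [Group G] [Group H] {f : G →* H}

lemma comap_ne_top_of_surjective (hf : Function.Surjective f) {K : Subgroup H} (hK : K ≠ ⊤) :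
    K.comap f ≠ ⊤ := by
  rwa [← (comap_injective hf).ne_iff, comap_top] at hK

lemma isCoatom_comap_iff_of_surjective (hf : Function.Surjective f) {K : Subgroup H} :
    IsCoatom (K.comap f) ↔ IsCoatom K := by
  refine ⟨fun hK => ⟨fun h => hK.1 (h ▸ comap_top f), fun L hL => ?_⟩,
    isCoatom_comap_of_surjective hf⟩
  have := hK.2 _ ((comap_lt_comap_of_surjective hf).mpr hL)
  exact comap_injective hf (this.trans (comap_top f).symm)

lemma IsCoatom.comap_map_eq_of_map_ne_top {M : Subgroup G} (hM : IsCoatom M)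
    (hf : Function.Surjective f) (h : M.map f ≠ ⊤) : (M.map f).comap f = M :=
  (hM.le_iff_eq (comap_ne_top_of_surjective hf h)).mp (le_comap_map f M)

end Coatom

lemma exists_mulEquiv_comp_eq {K G H : Type*} [Group K] [Group G] [Group H] [IsSimpleGroup G]
    [Nontrivial H] {ρ : K →* G} {σ : K →* H} (hρ : Function.Surjective ρ)
    (hσ : Function.Surjective σ) (hker : ρ.ker ≤ σ.ker) :
    ∃ α : G ≃* H, ∀ y, σ y = α (ρ y) := by
  set φ : G →* H := ρ.liftOfSurjective hρ ⟨σ, hker⟩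
  have hφ : ∀ y, φ (ρ y) = σ y := ρ.liftOfRightInverse_comp_apply _ _ ⟨σ, hker⟩
  have hφsurj : Function.Surjective φ := fun b => by
    obtain ⟨y, rfl⟩ := hσ b
    exact ⟨ρ y, hφ y⟩
  have hφinj : Function.Injective φ := by
    rw [← MonoidHom.ker_eq_bot_iff]
    refine φ.normal_ker.eq_bot_or_eq_top.resolve_right fun htop => ?_
    obtain ⟨c, hc⟩ := exists_ne (1 : H)
    obtain ⟨d, rfl⟩ := hφsurj c
    exact hc (φ.mem_ker.mp (htop ▸ mem_top d))
  exact ⟨MulEquiv.ofBijective φ ⟨hφinj, hφsurj⟩, fun y => (hφ y).symm⟩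

variable {ι S : Type*} [Group S]

def IsSubdirect (M : Subgroup (ι → S)) : Prop :=
  ∀ i, M.map (Pi.evalMonoidHom (fun _ : ι => S) i) = ⊤

lemma IsSubdirect.exists_mem {M : Subgroup (ι → S)} (hM : M.IsSubdirect) (i : ι) (a : S) :
    ∃ x ∈ M, x i = a :=
  mem_map.mp ((hM i).ge (mem_top a))

def coordFiber (M : Subgroup (ι → S)) (T : Finset ι) (s : ι) : Subgroup S :=
  (M ⊓ ⨅ j ∈ T, (Pi.evalMonoidHom (fun _ : ι => S) j).ker).map
    (Pi.evalMonoidHom (fun _ : ι => S) s)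

variable {M : Subgroup (ι → S)} {T : Finset ι} {r s : ι}

lemma mem_coordFiber {a : S} :
    a ∈ M.coordFiber T s ↔ ∃ x ∈ M, (∀ j ∈ T, x j = 1) ∧ x s = a := by
  simp [coordFiber, mem_iInf, and_assoc]

lemma coordFiber_normal (hM : M.IsSubdirect) : (M.coordFiber T s).Normal := by
  refine ⟨fun a ha g => ?_⟩
  obtain ⟨x, hx, hxT, rfl⟩ := mem_coordFiber.mp ha
  obtain ⟨y, hy, rfl⟩ := hM.exists_mem s g
  exact mem_coordFiber.mpr ⟨y * x * y⁻¹, mul_mem (mul_mem hy hx) (inv_mem hy),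
    fun j hj => by simp [hxT j hj], rfl⟩

lemma commutatorElement_mem_coordFiber_insert [DecidableEq ι] {a b : S}
    (ha : a ∈ M.coordFiber T s) (hb : b ∈ M.coordFiber {r} s) :
    ⁅a, b⁆ ∈ M.coordFiber (insert r T) s := by
  obtain ⟨x, hx, hxT, rfl⟩ := mem_coordFiber.mp ha
  obtain ⟨y, hy, hyr, rfl⟩ := mem_coordFiber.mp hb
  refine mem_coordFiber.mpr ⟨⁅x, y⁆, commutatorElement_def x y ▸
    mul_mem (mul_mem (mul_mem hx hy) (inv_mem hx)) (inv_mem hy), fun j hj => ?_, rfl⟩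
  rcases Finset.mem_insert.mp hj with rfl | hj
  · simp [commutatorElement_def, hyr j (Finset.mem_singleton_self j)]
  · simp [commutatorElement_def, hxT j hj]

def twistedDiagonal (r s : ι) (α : MulAut S) : Subgroup (ι → S) :=
  (α : S →* S).graph.comap ((Pi.evalMonoidHom (fun _ : ι => S) r).prod (Pi.evalMonoidHom _ s))

@[simp]
lemma mem_twistedDiagonal {α : MulAut S} {x : ι → S} :
    x ∈ twistedDiagonal r s α ↔ x s = α (x r) :=
  MonoidHom.mem_graph.trans eq_comm

lemma twistedDiagonal_symm (α : MulAut S) :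
    twistedDiagonal s r α.symm = twistedDiagonal r s α := by
  ext x
  simp only [mem_twistedDiagonal]
  exact α.eq_symm_apply.trans eq_comm

lemma twistedDiagonal_ne_top [Nontrivial S] (hrs : r ≠ s) (α : MulAut S) :
    twistedDiagonal r s α ≠ ⊤ := by
  classical
  intro h
  obtain ⟨c, hc⟩ := exists_ne (1 : S)
  have := mem_twistedDiagonal.mp (h ▸ mem_top (Pi.mulSingle s c))
  simp [hrs, hc] at this

lemma isSubdirect_twistedDiagonal (hrs : r ≠ s) (α : MulAut S) :
    (twistedDiagonal r s α).IsSubdirect := by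
  classical
  refine fun i => eq_top_iff' _ |>.mpr fun a => mem_map.mpr ?_
  rcases eq_or_ne i s with rfl | his
  · exact ⟨fun j => if j = i then a else α.symm a, by simp [hrs], by simp⟩
  · exact ⟨fun j => if j = s then α a else a, by simp [hrs], by simp [his]⟩

variable [IsSimpleGroup S]

lemma coordFiber_eq_top_of_forall_pair (hna : ¬ ∀ a b : S, a * b = b * a)
    (hM : M.IsSubdirect) (hpair : ∀ r s, r ≠ s → M.coordFiber {r} s = ⊤) (T : Finset ι)
    (hs : s ∉ T) : M.coordFiber T s = ⊤ := by
  classical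
  induction T using Finset.induction_on generalizing s with
  | empty => simpa [coordFiber] using hM s
  | @insert r T _ ih =>
    refine (coordFiber_normal hM).eq_bot_or_eq_top.resolve_left fun hbot => hna fun a b => ?_
    rw [← commutatorElement_eq_one_iff_mul_comm, ← mem_bot, ← hbot]
    refine commutatorElement_mem_coordFiber_insert ?_ ?_
    · exact ih (fun h => hs (Finset.mem_insert_of_mem h)) ▸ mem_top a
    · exact hpair r s (fun h => hs (h ▸ Finset.mem_insert_self r T)) ▸ mem_top b

lemma eq_top_of_forall_pair [Fintype ι] [DecidableEq ι] (hna : ¬ ∀ a b : S, a * b = b * a)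
    (hM : M.IsSubdirect) (hpair : ∀ r s, r ≠ s → M.coordFiber {r} s = ⊤) : M = ⊤ := by
  refine eq_top_iff' M |>.mpr fun x => pi_mem_of_mulSingle_mem x fun i => ?_
  have hi := coordFiber_eq_top_of_forall_pair hna hM hpair (s := i) (Finset.univ.erase i)
    (Finset.notMem_erase i _)
  obtain ⟨y, hy, hyT, hyi⟩ := mem_coordFiber.mp (hi ▸ mem_top (x i))
  have hy_eq : y = Pi.mulSingle i (x i) := by
    ext j
    rcases eq_or_ne j i with rfl | hj
    · simp [hyi]
    · simp [hj, hyT j (by simp [hj])]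
  exact hy_eq ▸ hy

lemma exists_le_twistedDiagonal (hM : M.IsSubdirect)
    (hbot : M.coordFiber {r} s = ⊥) : ∃ α : MulAut S, M ≤ twistedDiagonal r s α := by
  let π : ι → M →* S := fun i => (Pi.evalMonoidHom (fun _ : ι => S) i).comp M.subtype
  have hπ : ∀ i, Function.Surjective (π i) := fun i a =>
    (hM.exists_mem i a).elim fun x ⟨hx, hxa⟩ => ⟨⟨x, hx⟩, hxa⟩
  have hker : (π r).ker ≤ (π s).ker := fun x hx => by
    have : x.1 s ∈ M.coordFiber {r} s := mem_coordFiber.mpr ⟨x, x.2, by simpa [π] using hx, rfl⟩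
    simpa [hbot, π] using this
  obtain ⟨α, hα⟩ := exists_mulEquiv_comp_eq (hπ r) (hπ s) hker
  exact ⟨α, fun x hx => mem_twistedDiagonal.mpr (hα ⟨x, hx⟩)⟩

lemma IsCoatom.exists_eq_twistedDiagonal [Fintype ι] [DecidableEq ι]
    (hna : ¬ ∀ a b : S, a * b = b * a) (hM : IsCoatom M) (hsub : M.IsSubdirect) :
    ∃ r s α, r ≠ s ∧ M = twistedDiagonal r s α := by
  obtain ⟨r, s, hrs, hne⟩ : ∃ r s, r ≠ s ∧ M.coordFiber {r} s ≠ ⊤ := by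
    by_contra! h
    exact hM.1 (eq_top_of_forall_pair hna hsub h)
  obtain ⟨α, hle⟩ :=
    exists_le_twistedDiagonal hsub ((coordFiber_normal hsub).eq_bot_or_eq_top.resolve_right hne)
  exact ⟨r, s, α, hrs, ((hM.le_iff_eq (twistedDiagonal_ne_top hrs α)).mp hle).symm⟩

end Subgroup

theorem stmt8_general (S : Type*) [Group S] [IsSimpleGroup S]
    (hna : ¬ ∀ a b : S, a * b = b * a) (t : ℕ)
    (M : Subgroup (Fin t → S)) (hM : IsCoatom M) :
    Xor'
      (∃ (i : Fin t) (H : Subgroup S), IsCoatom H ∧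
        M = H.comap (Pi.evalMonoidHom (fun _ : Fin t => S) i))
      (∃ (r s : Fin t) (α : MulAut S), r < s ∧
        (M : Set (Fin t → S)) = {x | x s = α (x r)}) := by
  have hπ (i : Fin t) : Function.Surjective (Pi.evalMonoidHom (fun _ : Fin t => S) i) :=
    Function.surjective_eval i
  have coe_twistedDiagonal (r s : Fin t) (α : MulAut S) :
      (twistedDiagonal r s α : Set (Fin t → S)) = {x | x s = α (x r)} := by
    ext; simp
  by_cases hsub : M.IsSubdirect
  · refine Or.inr ⟨?_, ?_⟩
    · obtain ⟨r, s, α, hrs, rfl⟩ := hM.exists_eq_twistedDiagonal hna hsub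
      rcases hrs.lt_or_gt with h | h
      · exact ⟨r, s, α, h, coe_twistedDiagonal r s α⟩
      · exact ⟨s, r, α.symm, h, by rw [← twistedDiagonal_symm, coe_twistedDiagonal]⟩
    · rintro ⟨i, H, hH, rfl⟩
      exact hH.1 (by simpa [map_comap_eq_self_of_surjective (hπ i)] using hsub i)
  · obtain ⟨i, hi⟩ := not_forall.mp hsub
    have hMH := hM.comap_map_eq_of_map_ne_top (hπ i) hi
    have hH : IsCoatom (M.map (Pi.evalMonoidHom _ i)) :=
      (isCoatom_comap_iff_of_surjective (hπ i)).mp (by rwa [hMH])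
    refine Or.inl ⟨⟨i, _, hH, hMH.symm⟩, ?_⟩
    rintro ⟨r, s, α, hrs, hMα⟩
    rw [← coe_twistedDiagonal, SetLike.coe_set_eq] at hMα
    exact hsub (hMα ▸ isSubdirect_twistedDiagonal hrs.ne α)

/-- Every maximal subgroup of `S^t` (`S` finite nonabelian simple) is of exactly one of
the two forms: (1) the preimage of a maximal subgroup of `S` under a coordinate
projection; (2) a "diagonal" subgroup `{x | x s = α (x r)}` for some `r < s` and
`α ∈ Aut S`. -/
theorem stmt8 (S : Type*) [Group S] [Finite S] [IsSimpleGroup S]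
    (hna : ¬ ∀ a b : S, a * b = b * a) (t : ℕ) (ht : 0 < t)
    (M : Subgroup (Fin t → S)) (hM : IsCoatom M) :
    Xor'
      (∃ (i : Fin t) (H : Subgroup S), IsCoatom H ∧
        M = H.comap (Pi.evalMonoidHom (fun _ : Fin t => S) i))
      (∃ (r s : Fin t) (α : MulAut S), r < s ∧
        (M : Set (Fin t → S)) = {x | x s = α (x r)}) :=
  stmt8_general S hna t M hM
end

section
/- Let G = A × B be a direct product of finite groups with projections π_A, π_B. If M is a maximal subgroup of A × B with π_A(M) = A and π_B(M) = B, then there exist normal subgroups N ⊴ A, N' ⊴ B with A/N simple, and an isomorphism φ : A/N → B/N', such that M = {(a,b) ∈ A × B : φ(aN) = bN'}. -/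
open Subgroup

/-- Goursat for maximal subgroups of a direct product: if `M` is a maximal subgroup of
`A × B` projecting onto both factors, then there are normal subgroups `N ⊴ A`, `N' ⊴ B`
with `A/N` simple and an isomorphism `φ : A/N ≃ B/N'` such that
`M = {(a,b) | φ(aN) = bN'}`.  (Equivalently: there are surjections `f : A → T`,
`g : B → T` onto a simple group `T` with `M = {(a,b) | f a = g b}`; here `T = A/N`,
`N = ker f`, `N' = ker g`, and `φ` is the induced isomorphism.) -/
theorem stmt10 (A B : Type) [Group A] [Group B] [Finite A] [Finite B]
    (M : Subgroup (A × B)) (hM : IsCoatom M)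
    (hA : M.map (MonoidHom.fst A B) = ⊤) (hB : M.map (MonoidHom.snd A B) = ⊤) :
    ∃ (T : Type) (_ : Group T) (f : A →* T) (g : B →* T),
      Function.Surjective f ∧ Function.Surjective g ∧ IsSimpleGroup T ∧
      (M : Set (A × B)) = {x : A × B | f x.1 = g x.2} := by
  classical
  -- surjectivity of the two projections, elementwise
  have hAs : ∀ a : A, ∃ x, x ∈ M ∧ x.1 = a := by
    intro a
    have : a ∈ M.map (MonoidHom.fst A B) := hA ▸ mem_top a
    rcases this with ⟨x, hx, hx1⟩
    exact ⟨x, hx, hx1⟩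
  have hBs : ∀ b : B, ∃ x, x ∈ M ∧ x.2 = b := by
    intro b
    have : b ∈ M.map (MonoidHom.snd A B) := hB ▸ mem_top b
    rcases this with ⟨x, hx, hx2⟩
    exact ⟨x, hx, hx2⟩
  -- N = {a | (a,1) ∈ M}
  set N : Subgroup A := M.comap (MonoidHom.inl A B) with hN
  have hNmem : ∀ a : A, a ∈ N ↔ ((a, 1) : A × B) ∈ M := fun a => Iff.rfl
  haveI : N.Normal := by
    constructor
    intro n hn a
    rcases hAs a with ⟨x, hxM, hx1⟩
    have h1 : x * (n, 1) * x⁻¹ ∈ M := M.mul_mem (M.mul_mem hxM ((hNmem n).1 hn)) (M.inv_mem hxM)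
    have h2 : x * (n, 1) * x⁻¹ = ((a * n * a⁻¹, 1) : A × B) := by
      cases x with
      | mk x1 x2 =>
        simp only at hx1
        subst hx1
        simp [Prod.ext_iff, mul_assoc]
    rw [h2] at h1
    exact (hNmem _).2 h1
  set T := A ⧸ N with hT
  set f : A →* T := QuotientGroup.mk' N with hf
  -- key well-definedness
  have key : ∀ x y : A × B, x ∈ M → y ∈ M → x.2 = y.2 → f x.1 = f y.1 := by
    intro x y hx hy h2
    have hmem : x⁻¹ * y ∈ M := M.mul_mem (M.inv_mem hx) hy
    have : (x⁻¹ * y) = ((x.1⁻¹ * y.1, 1) : A × B) := by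
      cases x; cases y
      simp_all [Prod.ext_iff]
    rw [this] at hmem
    have hn : x.1⁻¹ * y.1 ∈ N := (hNmem _).2 hmem
    exact (QuotientGroup.eq ).2 hn
  -- section for g
  choose s hsM hs2 using hBs
  have g1 : ∀ b : B, ∀ x : A × B, x ∈ M → x.2 = b → f x.1 = f (s b).1 := by
    intro b x hx hx2
    exact key x (s b) hx (hsM b) (by rw [hx2, hs2])
  set g : B →* T :=
    { toFun := fun b => f (s b).1
      map_one' := by
        have := g1 1 (1, 1) M.one_mem rfl
        simpa using this.symm
      map_mul' := by
        intro b b'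
        have hmul : (s b) * (s b') ∈ M := M.mul_mem (hsM b) (hsM b')
        have h2 : ((s b) * (s b')).2 = b * b' := by simp [hs2]
        have := g1 (b * b') ((s b) * (s b')) hmul h2
        simpa using this.symm } with hg
  have gval : ∀ b : B, g b = f (s b).1 := fun b => rfl
  -- M as set = fiber product
  have Mset : (M : Set (A × B)) = {x : A × B | f x.1 = g x.2} := by
    ext x
    constructor
    · intro hx
      exact g1 x.2 x hx rfl
    · intro hx
      have hfx : f x.1 = f (s x.2).1 := hx
      have hn : x.1⁻¹ * (s x.2).1 ∈ N := (QuotientGroup.eq).1 hfx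
      have hmem : ((x.1⁻¹ * (s x.2).1, 1) : A × B) ∈ M := (hNmem _).2 hn
      have : (s x.2) * ((x.1⁻¹ * (s x.2).1, 1) : A × B)⁻¹ ∈ M :=
        M.mul_mem (hsM x.2) (M.inv_mem hmem)
      have heq : (s x.2) * ((x.1⁻¹ * (s x.2).1, 1) : A × B)⁻¹ = x := by
        have h2 := hs2 x.2
        cases hsx : s x.2 with
        | mk a b =>
          rw [hsx] at h2
          simp only at h2
          subst h2
          simp [Prod.ext_iff, mul_inv_rev]
          done
      rwa [heq] at this
  -- surjectivity
  have fsurj : Function.Surjective f := QuotientGroup.mk'_surjective N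
  have gsurj : Function.Surjective g := by
    intro t
    rcases fsurj t with ⟨a, ha⟩
    rcases hAs a with ⟨x, hxM, hx1⟩
    refine ⟨x.2, ?_⟩
    have : f x.1 = g x.2 := (Set.ext_iff.mp Mset x).1 hxM
    rw [← this, hx1, ha]
  -- nontriviality of T
  have hnt : Nontrivial T := by
    by_contra h
    rw [not_nontrivial_iff_subsingleton] at h
    have : M = ⊤ := by
      rw [← SetLike.coe_set_eq, Mset]
      ext x
      simp [Subsingleton.elim (f x.1) (g x.2)]
    exact hM.1 this
  -- simplicity
  have hsimple : IsSimpleGroup T := by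
    constructor
    intro P hP
    -- construct M_P
    set MP : Subgroup (A × B) :=
      { carrier := {x : A × B | f x.1 * (g x.2)⁻¹ ∈ P}
        one_mem' := by simpa using P.one_mem
        mul_mem' := by
          intro x y hx hy
          simp only [Set.mem_setOf_eq, Prod.fst_mul, Prod.snd_mul, map_mul] at *
          have h1 : f x.1 * (f y.1 * (g y.2)⁻¹) * (f x.1)⁻¹ ∈ P := hP.conj_mem _ hy _
          have h2 : (f x.1 * (f y.1 * (g y.2)⁻¹) * (f x.1)⁻¹) * (f x.1 * (g x.2)⁻¹) ∈ P :=
            P.mul_mem h1 hx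
          have heq : (f x.1 * (f y.1 * (g y.2)⁻¹) * (f x.1)⁻¹) * (f x.1 * (g x.2)⁻¹)
              = f x.1 * f y.1 * ((g x.2 * g y.2)⁻¹) := by group
          rwa [heq] at h2
        inv_mem' := by
          intro x hx
          simp only [Set.mem_setOf_eq, Prod.fst_inv, Prod.snd_inv, map_inv] at *
          have h1 : (f x.1)⁻¹ * (f x.1 * (g x.2)⁻¹)⁻¹ * ((f x.1)⁻¹)⁻¹ ∈ P :=
            hP.conj_mem _ (P.inv_mem hx) _
          have heq : (f x.1)⁻¹ * (f x.1 * (g x.2)⁻¹)⁻¹ * ((f x.1)⁻¹)⁻¹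
              = (f x.1)⁻¹ * ((g x.2)⁻¹)⁻¹ := by group
          rwa [heq] at h1 } with hMP
    have hMPmem : ∀ x : A × B, x ∈ MP ↔ f x.1 * (g x.2)⁻¹ ∈ P := fun x => Iff.rfl
    have hMle : M ≤ MP := by
      intro x hx
      have h : f x.1 = g x.2 := (Set.ext_iff.mp Mset x).1 hx
      rw [hMPmem, h, mul_inv_cancel]
      exact P.one_mem
    rcases eq_or_ne MP ⊤ with htop | hne
    · -- P = ⊤
      right
      rw [eq_top_iff]
      intro t _
      rcases fsurj t with ⟨a, ha⟩
      have : ((a, 1) : A × B) ∈ MP := htop ▸ mem_top _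
      rw [hMPmem] at this
      simpa [ha] using this
    · -- MP = M, hence P = ⊥
      left
      have hMPeq : MP = M := by
        rcases lt_or_eq_of_le hMle with hlt | heq
        · exact absurd (hM.2 MP hlt) hne
        · exact heq.symm
      rw [eq_bot_iff]
      intro t ht
      rcases fsurj t with ⟨a, ha⟩
      have : ((a, 1) : A × B) ∈ MP := by
        rw [hMPmem]
        simpa [ha] using ht
      rw [hMPeq] at this
      have hfa : f a = g 1 := (Set.ext_iff.mp Mset ((a,1) : A × B)).1 this
      rw [← ha, hfa]
      simp
  exact ⟨T, inferInstance, f, g, fsurj, gsurj, hsimple, Mset⟩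
end

section
/- For the elementary abelian group G = C_2^d (d ≥ 1), the expected number of uniformly random elements needed to generate G satisfies e(G) = d + ∑_{i=1}^{d} 1/(2^i - 1), and consequently d ≤ e(G) ≤ d + 2. -/
/-! Identify `C₂^d` with `𝔽₂^d`. Then `n` random elements generate it iff the `n × d` matrix they
form has rank `d`, i.e. iff its `d` columns in `𝔽₂^n` are independent, which happens with
probability `Q_d(n) = ∏_{j<d} (1 - 2^j / 2^n)`. Since `Q_{d+1}(n) = Q_d(n) (1 - 2^d / 2^n)`,
`e(C₂^{d+1}) - e(C₂^d) = ∑ₙ Q_d(n) 2^d / 2^n`, and this series telescopes: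
`Q_{d+1}(n+1) - Q_{d+1}(n) = (1 - 2^{-(d+1)}) Q_d(n) 2^d / 2^n` with `Q_{d+1}(n) → 1`, so it sums
to `1 + 1 / (2^{d+1} - 1)`. Everything works verbatim for `C_p^d`. The upper bound comes from
`1 / (2^(i+1) - 1) ≤ 2^{-i}`. -/

open Subgroup

open Finset Filter Topology Module

theorem Submodule.toAddSubgroup_span_zmod {n : ℕ} {M : Type*} [AddCommGroup M]
    [Module (ZMod n) M] (s : Set M) : (span (ZMod n) s).toAddSubgroup = AddSubgroup.closure s := by
  rw [← span_int_eq_addSubgroupClosure,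
    ← restrictScalars_span ℤ (ZMod n) ZMod.intCast_surjective]
  rfl

theorem Subgroup.closure_range_eq_top_iff_span_eq_top {n : ℕ} {M ι : Type*} [AddCommGroup M]
    [Module (ZMod n) M] (v : ι → Multiplicative M) :
    closure (Set.range v) = ⊤ ↔
      Submodule.span (ZMod n) (Set.range (Multiplicative.toAdd ∘ v)) = ⊤ := by
  rw [← toAddSubgroup'.injective.eq_iff, toAddSubgroup'_closure, OrderIso.map_top,
    ← Submodule.toAddSubgroup_injective.eq_iff, Submodule.toAddSubgroup_span_zmod,
    Submodule.top_toAddSubgroup, Set.range_comp, Equiv.image_eq_preimage_symm]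
  rfl

theorem Matrix.span_row_eq_top_iff_linearIndependent_col {K m n : Type*} [Field K] [Fintype m]
    [Fintype n] (A : Matrix m n K) :
    Submodule.span K (Set.range A.row) = ⊤ ↔ LinearIndependent K A.col := by
  rw [linearIndependent_iff_card_eq_finrank_span, Set.finrank, ← rank_eq_finrank_span_cols,
    rank_eq_finrank_span_row, ← finrank_fintype_fun_eq_card (R := K)]
  exact ⟨fun h => by rw [h, finrank_top], fun h => Submodule.eq_top_of_finrank_eq h.symm⟩

theorem card_spanning_tuples (K : Type*) [Field K] [Fintype K] (n d : ℕ) :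
    (Nat.card {w : Fin n → Fin d → K // Submodule.span K (Set.range w) = ⊤} : ℝ) =
      ∏ i ∈ range d, ((Fintype.card K : ℝ) ^ n - Fintype.card K ^ i) := by
  have transpose : {w : Fin n → Fin d → K // Submodule.span K (Set.range w) = ⊤} ≃
      {s : Fin d → Fin n → K // LinearIndependent K s} :=
    Equiv.subtypeEquiv (Equiv.piComm _) fun w =>
      (Matrix.of w).span_row_eq_top_iff_linearIndependent_col
  rw [Nat.card_congr transpose]
  rcases le_or_gt d n with hdn | hnd
  · rw [card_linearIndependent (by simpa using hdn), Nat.cast_prod,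
      ← Fin.prod_univ_eq_prod_range]
    refine prod_congr rfl fun i _ => ?_
    rw [finrank_fintype_fun_eq_card, Fintype.card_fin, Nat.cast_sub, Nat.cast_pow, Nat.cast_pow]
    exact Nat.pow_le_pow_right Fintype.card_pos (i.is_lt.le.trans hdn)
  · have : IsEmpty {s : Fin d → Fin n → K // LinearIndependent K s} :=
      ⟨fun ⟨s, hs⟩ => by
        have := hs.fintype_card_le_finrank
        simp only [Fintype.card_fin, finrank_fin_fun] at this
        omega⟩
    rw [Nat.card_of_isEmpty, Nat.cast_zero, eq_comm]
    exact prod_eq_zero (mem_range.2 hnd) (sub_self _)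

theorem Monotone.hasSum_succ_sub {f : ℕ → ℝ} {l : ℝ} (hf : Monotone f)
    (h : Tendsto f atTop (𝓝 l)) : HasSum (fun n => f (n + 1) - f n) (l - f 0) := by
  rw [hasSum_iff_tendsto_nat_of_nonneg fun n => sub_nonneg.2 (hf n.le_succ)]
  simpa only [sum_range_sub] using h.sub_const (f 0)

noncomputable def spanProb (q : ℝ) (d n : ℕ) : ℝ := ∏ j ∈ range d, (1 - q ^ j / q ^ n)

section spanProb

variable {q : ℝ} {d n : ℕ}

theorem spanProb_of_lt (hq : q ≠ 0) (h : n < d) : spanProb q d n = 0 :=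
  prod_eq_zero (mem_range.2 h) (by rw [div_self (pow_ne_zero n hq), sub_self])

theorem spanProb_nonneg (hq : 1 ≤ q) : 0 ≤ spanProb q d n := by
  rcases lt_or_ge n d with h | h
  · rw [spanProb_of_lt (by positivity) h]
  · refine prod_nonneg fun j hj => sub_nonneg.2 <| div_le_one_of_le₀ ?_ (by positivity)
    exact pow_le_pow_right₀ hq ((mem_range.1 hj).le.trans h)

theorem spanProb_succ_left (q : ℝ) (d n : ℕ) :
    spanProb q (d + 1) n = spanProb q d n * (1 - q ^ d / q ^ n) :=
  prod_range_succ _ d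

theorem spanProb_succ_succ (hq : q ≠ 0) :
    spanProb q (d + 1) (n + 1) = spanProb q d n * (1 - 1 / q ^ (n + 1)) := by
  rw [spanProb, prod_range_succ', pow_zero, spanProb]
  congr 2 with j
  rw [pow_succ, pow_succ, mul_div_mul_right _ _ hq]

theorem spanProb_succ_succ_sub (hq : q ≠ 0) (d n : ℕ) :
    spanProb q (d + 1) (n + 1) - spanProb q (d + 1) n =
      (1 - 1 / q ^ (d + 1)) * (spanProb q d n * (q ^ d / q ^ n)) := by
  rw [spanProb_succ_succ hq, spanProb_succ_left]
  field_simp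
  ring

theorem tendsto_spanProb (hq : 1 < q) (d : ℕ) : Tendsto (spanProb q d) atTop (𝓝 1) := by
  have hj : ∀ j ∈ range d, Tendsto (fun n : ℕ => 1 - q ^ j / q ^ n) atTop (𝓝 1) :=
    fun j _ => by
      simpa using tendsto_const_nhds.sub
        (tendsto_const_nhds.div_atTop (tendsto_pow_atTop_atTop_of_one_lt hq))
  have := tendsto_finsetProd _ hj
  rwa [prod_const_one] at this

theorem hasSum_spanProb_mul (hq : 1 < q) (d : ℕ) :
    HasSum (fun n => spanProb q d n * (q ^ d / q ^ n)) (1 + 1 / (q ^ (d + 1) - 1)) := by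
  have hq0 : q ≠ 0 := by positivity
  have hc : 0 < 1 - 1 / q ^ (d + 1) :=
    sub_pos.2 <| (div_lt_one (by positivity)).2 (one_lt_pow₀ hq d.succ_ne_zero)
  have hmono : Monotone (spanProb q (d + 1)) := monotone_nat_of_le_succ fun n => by
    rw [← sub_nonneg, spanProb_succ_succ_sub hq0]
    exact mul_nonneg hc.le (mul_nonneg (spanProb_nonneg hq.le) (by positivity))
  have htel := hmono.hasSum_succ_sub (tendsto_spanProb hq (d + 1))
  simp only [spanProb_succ_succ_sub hq0, spanProb_of_lt hq0 d.succ_pos] at htel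
  have hinv : (1 - 1 / q ^ (d + 1)) * (1 + 1 / (q ^ (d + 1) - 1)) = 1 := by
    have : q ^ (d + 1) - 1 ≠ 0 := sub_ne_zero.2 (one_lt_pow₀ hq d.succ_ne_zero).ne'
    field_simp
    ring
  rw [← hasSum_mul_left_iff hc.ne', hinv]
  simpa only [sub_zero] using htel

theorem hasSum_one_sub_spanProb (hq : 1 < q) (d : ℕ) :
    HasSum (fun n => 1 - spanProb q d n) (d + ∑ i ∈ Icc 1 d, 1 / (q ^ i - 1)) := by
  induction d with
  | zero => simp [spanProb, hasSum_zero]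
  | succ d ih =>
    have hsplit : ∀ n, 1 - spanProb q (d + 1) n =
        (1 - spanProb q d n) + spanProb q d n * (q ^ d / q ^ n) := fun n => by
      rw [spanProb_succ_left]
      ring
    rw [sum_Icc_succ_top (Nat.le_add_left 1 d), Nat.cast_succ]
    convert ih.add (hasSum_spanProb_mul hq d) using 1
    · exact funext hsplit
    · ring

end spanProb

theorem genProb_elementaryAbelian (p : ℕ) [Fact p.Prime] (d n : ℕ) :
    genProb (Multiplicative (Fin d → ZMod p)) ∅ n = spanProb p d n := by
  have toSpanning : {v : Fin n → Multiplicative (Fin d → ZMod p) //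
        Subgroup.closure (∅ ∪ Set.range v) = ⊤} ≃
      {w : Fin n → Fin d → ZMod p // Submodule.span (ZMod p) (Set.range w) = ⊤} :=
    Equiv.subtypeEquiv (Equiv.piCongrRight fun _ => Multiplicative.toAdd) fun v => by
      rw [Set.empty_union, Subgroup.closure_range_eq_top_iff_span_eq_top (n := p)]
      rfl
  have hcard : (Nat.card (Multiplicative (Fin d → ZMod p)) : ℝ) = (p : ℝ) ^ d := by
    rw [Nat.card_congr Multiplicative.toAdd, Nat.card_fun, Nat.card_zmod, Nat.card_fin]
    push_cast
    rfl
  have hp : (p : ℝ) ≠ 0 := mod_cast (Fact.out : p.Prime).ne_zero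
  have hterm : ∀ j ∈ range d, 1 - (p : ℝ) ^ j / p ^ n = ((p : ℝ) ^ n - p ^ j) / p ^ n :=
    fun j _ => by field_simp
  rw [genProb, Nat.card_congr toSpanning, card_spanning_tuples, ZMod.card, hcard, spanProb,
    prod_congr rfl hterm, prod_div_distrib, prod_const, card_range, pow_right_comm]

theorem eTime_elementaryAbelian (p : ℕ) [Fact p.Prime] (d : ℕ) :
    eTime (Multiplicative (Fin d → ZMod p)) ∅ =
      d + ∑ i ∈ Icc 1 d, 1 / ((p : ℝ) ^ i - 1) := by
  have hp : (1 : ℝ) < p := Nat.one_lt_cast.2 (Fact.out : p.Prime).one_lt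
  simp only [eTime, genProb_elementaryAbelian]
  exact (hasSum_one_sub_spanProb hp d).tsum_eq

theorem sum_Icc_one_div_two_pow_sub_one_le_two (d : ℕ) :
    ∑ i ∈ Icc 1 d, 1 / ((2 : ℝ) ^ i - 1) ≤ 2 := by
  rw [← Ico_add_one_right_eq_Icc, sum_Ico_eq_sum_range, add_tsub_cancel_right]
  refine (sum_le_sum fun i _ => ?_).trans (sum_geometric_two_le d)
  rw [one_div_pow, add_comm, pow_succ]
  have := one_le_pow₀ (M₀ := ℝ) one_le_two (n := i)
  gcongr
  linarith

theorem stmt12_general (d : ℕ) :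
    eTime (Multiplicative (Fin d → ZMod 2)) ∅ =
        d + ∑ i ∈ Finset.Icc 1 d, (1 : ℝ) / (2 ^ i - 1) ∧
      (d : ℝ) ≤ eTime (Multiplicative (Fin d → ZMod 2)) ∅ ∧
      eTime (Multiplicative (Fin d → ZMod 2)) ∅ ≤ d + 2 := by
  have he : eTime (Multiplicative (Fin d → ZMod 2)) ∅ =
      d + ∑ i ∈ Icc 1 d, (1 : ℝ) / (2 ^ i - 1) := by
    simpa using eTime_elementaryAbelian 2 d
  have hnonneg : 0 ≤ ∑ i ∈ Icc 1 d, (1 : ℝ) / (2 ^ i - 1) :=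
    sum_nonneg fun _ _ => one_div_nonneg.2 <| sub_nonneg.2 <| one_le_pow₀ one_le_two
  have hle := sum_Icc_one_div_two_pow_sub_one_le_two d
  exact ⟨he, by linarith, by linarith⟩

/-- For `G = C₂^d` (`d ≥ 1`), `e(G) = d + ∑_{i=1}^d 1/(2^i - 1)`, hence
`d ≤ e(G) ≤ d + 2`. -/
theorem stmt12 (d : ℕ) (hd : 1 ≤ d) :
    eTime (Multiplicative (Fin d → ZMod 2)) ∅ =
        d + ∑ i ∈ Finset.Icc 1 d, (1 : ℝ) / (2 ^ i - 1) ∧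
      (d : ℝ) ≤ eTime (Multiplicative (Fin d → ZMod 2)) ∅ ∧
      eTime (Multiplicative (Fin d → ZMod 2)) ∅ ≤ d + 2 :=
  stmt12_general d
end

section
/- Let H be a finite group and V an irreducible F_p H-module with F = End_H(V), q = |F|, r = dim_F V. Then the H-submodule of V^δ generated by any single element is isomorphic to V^k for some k ≤ r. Consequently, if δ > r, then for any v ∈ V^δ the number of maximal H-submodules of V^δ containing v is at least (q^{δ-r} - 1)/(q - 1). -/
/-!
Write `F = End_R V`. Whether `r : R` kills `x ∈ V^δ` depends only on the `F`-span `U` of the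
coordinates of `x`, so `R ∙ x ≅ R ⧸ Ann(x) = R ⧸ Ann(b)` for an `F`-basis `b` of `U`. By the
Jacobson density theorem `r ↦ r • b` maps `R` onto `V^k` with `k = dim_F U ≤ dim_F V`, hence
`R ∙ x ≅ V^k`.

Every nonzero `ψ : V^δ → V` has a maximal kernel, and two of them have the same kernel only if
they are `F`-proportional. So the maximal submodules containing `v` are at least as many as the
points of the projective space of `{ψ | ψ v = 0}`, an `F`-subspace of `Hom_R(V^δ, V) ≅ F^δ` of
dimension at least `δ - dim_F V`.
-/

open Module Submodule LinearMap
open scoped LinearAlgebra.Projectivization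

theorem LinearMap.finrank_sub_finrank_le_finrank_ker {K A B : Type*} [DivisionRing K]
    [AddCommGroup A] [Module K A] [AddCommGroup B] [Module K B] [Module.Finite K A]
    [Module.Finite K B] (f : A →ₗ[K] B) :
    finrank K A - finrank K B ≤ finrank K (ker f) := by
  have := f.finrank_range_add_finrank_ker
  have := (range f).finrank_le
  omega

theorem Projectivization.pow_sub_one_div_le_natCard {k W : Type*} [DivisionRing k]
    [AddCommGroup W] [Module k W] [Module.Finite k W] {n : ℕ} (hn : n ≤ finrank k W) :
    (Nat.card k ^ n - 1) / (Nat.card k - 1) ≤ Nat.card (ℙ k W) := by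
  rcases Nat.lt_or_ge (Nat.card k) 2 with hk | hk
  · simp [show Nat.card k - 1 = 0 by omega]
  refine Nat.div_le_of_le_mul ?_
  calc Nat.card k ^ n - 1 ≤ Nat.card k ^ finrank k W - 1 :=
        Nat.sub_le_sub_right (Nat.pow_le_pow_right (by omega) hn) 1
    _ = (Nat.card k - 1) * Nat.card (ℙ k W) := by
        rw [← natCard_eq_pow_finrank (K := k), Projectivization.card k W, mul_comm]

section

variable {R : Type*} [Ring R] {V : Type*} [AddCommGroup V] [Module R V]
  {M : Type*} [AddCommGroup M] [Module R M]

theorem LinearMap.exists_eq_comp_of_ker_le {N : Type*} [AddCommGroup N] [Module R N]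
    {f : M →ₗ[R] N} {g : M →ₗ[R] V} (hf : Function.Surjective f) (h : ker f ≤ ker g) :
    ∃ c : N →ₗ[R] V, g = c ∘ₗ f := by
  refine ⟨(ker f).liftQ g h ∘ₗ (f.quotKerEquivOfSurjective hf).symm.toLinearMap, ?_⟩
  ext x
  have : (f.quotKerEquivOfSurjective hf).symm (f x) = (ker f).mkQ x :=
    (f.quotKerEquivOfSurjective hf).symm_apply_eq.mpr rfl
  simp [this]

theorem mem_torsionOf_pi_iff_span_le_ker {ι : Type*} (x : ι → V) (r : R) :
    r ∈ Ideal.torsionOf R (ι → V) x ↔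
      span (End R V) (Set.range x) ≤ ker (toModuleEnd (End R V) (S := R) V r) := by
  simp only [Ideal.mem_torsionOf_iff, Submodule.span_le, Set.range_subset_iff, funext_iff]
  rfl

theorem torsionOf_pi_eq_of_span_eq {ι κ : Type*} {x : ι → V} {y : κ → V}
    (h : span (End R V) (Set.range x) = span (End R V) (Set.range y)) :
    Ideal.torsionOf R (ι → V) x = Ideal.torsionOf R (κ → V) y := by
  ext r
  rw [mem_torsionOf_pi_iff_span_le_ker, mem_torsionOf_pi_iff_span_le_ker, h]

variable [IsSimpleModule R V]

theorem toSpanSingleton_pi_surjective_of_linearIndependent {ι : Type*} [Finite ι] {b : ι → V}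
    (hb : LinearIndependent (End R V) b) :
    Function.Surjective (toSpanSingleton R (ι → V) b) := by
  classical
  intro w
  obtain ⟨f, hf⟩ := LinearMap.exists_extend (Finsupp.linearCombination (End R V) w ∘ₗ hb.repr)
  replace hf (i : ι) : f (b i) = w i := by
    simpa [hb.repr_eq_single i ⟨b i, subset_span ⟨i, rfl⟩⟩ rfl] using
      congr($hf ⟨b i, subset_span ⟨i, rfl⟩⟩)
  have := Fintype.ofFinite ι
  obtain ⟨r, hr⟩ := jacobson_density f (Finset.univ.image b)
  exact ⟨r, funext fun i => (hr (b i) (by simp)).symm.trans (hf i)⟩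

theorem exists_span_singleton_pi_linearEquiv [Module.Finite (End R V) V] {ι : Type*}
    (x : ι → V) :
    ∃ k ≤ finrank (End R V) V, Nonempty (span R {x} ≃ₗ[R] (Fin k → V)) := by
  classical
  let U := span (End R V) (Set.range x)
  let bU := Module.finBasis (End R V) U
  let b : Fin (finrank (End R V) U) → V := U.subtype ∘ bU
  have hb : LinearIndependent (End R V) b :=
    bU.linearIndependent.map' U.subtype (ker_subtype U)
  have hspan : span (End R V) (Set.range b) = U := by
    rw [Set.range_comp, span_image, bU.span_eq, map_subtype_top]
  exact ⟨_, U.finrank_le, ⟨(Ideal.quotTorsionOfEquivSpanSingleton R _ x).symm ≪≫ₗ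
    quotEquivOfEq _ _ (torsionOf_pi_eq_of_span_eq hspan.symm) ≪≫ₗ
    (toSpanSingleton R _ b).quotKerEquivOfSurjective
      (toSpanSingleton_pi_surjective_of_linearIndependent hb)⟩⟩

theorem finrank_pi_linearMap_eq (ι : Type*) [Fintype ι] :
    finrank (End R V) ((ι → V) →ₗ[R] V) = Fintype.card ι := by
  classical
  rw [← (LinearMap.lsum R (fun _ : ι => V) (End R V)).finrank_eq, finrank_fintype_fun_eq_card]

theorem natCard_projectivization_le_natCard_isCoatom_mem [DecidableEq (End R V)] [Finite M]
    {v : M} (K : Submodule (End R V) (M →ₗ[R] V)) (hK : ∀ ψ ∈ K, ψ v = 0) :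
    Nat.card (ℙ (End R V) K) ≤ Nat.card {W : Submodule R M // IsCoatom W ∧ v ∈ W} := by
  have rep_ne_zero (P : ℙ (End R V) K) : (P.rep : M →ₗ[R] V) ≠ 0 :=
    fun h => P.rep_nonzero (Subtype.ext h)
  let kerRep (P : ℙ (End R V) K) : {W : Submodule R M // IsCoatom W ∧ v ∈ W} :=
    ⟨ker P.rep.1, isCoatom_ker_of_surjective (surjective_of_ne_zero (rep_ne_zero P)),
      hK _ P.rep.2⟩
  refine Nat.card_le_card_of_injective kerRep fun P Q hPQ => ?_
  obtain ⟨c, hc⟩ := exists_eq_comp_of_ker_le (surjective_of_ne_zero (rep_ne_zero Q))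
    (congrArg Subtype.val hPQ).ge
  rw [← P.mk_rep, ← Q.mk_rep, Projectivization.mk_eq_mk_iff']
  exact ⟨c, Subtype.ext (hc ▸ rfl)⟩

theorem pow_sub_one_div_le_natCard_isCoatom_mem [Finite M] [Finite V] (v : M) :
    (Nat.card (End R V) ^ (finrank (End R V) (M →ₗ[R] V) - finrank (End R V) V) - 1) /
        (Nat.card (End R V) - 1) ≤
      Nat.card {W : Submodule R M // IsCoatom W ∧ v ∈ W} := by
  classical
  have : Finite (M →ₗ[R] V) := Finite.of_injective _ DFunLike.coe_injective
  let K := ker (applyₗ' (R := R) (M₂ := V) (End R V) v)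
  have : Module.Finite (End R V) K := Module.Finite.of_finite
  calc _ ≤ Nat.card (ℙ (End R V) K) :=
        Projectivization.pow_sub_one_div_le_natCard (finrank_sub_finrank_le_finrank_ker _)
    _ ≤ _ := natCard_projectivization_le_natCard_isCoatom_mem K fun _ hψ => hψ

end

theorem stmt16_general (p : ℕ) (H : Type) [Group H]
    (V : Type) [AddCommGroup V] [Finite V]
    [Module (MonoidAlgebra (ZMod p) H) V]
    [IsSimpleModule (MonoidAlgebra (ZMod p) H) V]
    (δ : ℕ) :
    (∀ x : Fin δ → V,
      ∃ k ≤ Module.finrank (Module.End (MonoidAlgebra (ZMod p) H) V) V,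
        Nonempty ((Submodule.span (MonoidAlgebra (ZMod p) H) {x} :
            Submodule (MonoidAlgebra (ZMod p) H) (Fin δ → V)) ≃ₗ[MonoidAlgebra (ZMod p) H]
          (Fin k → V))) ∧
    (Module.finrank (Module.End (MonoidAlgebra (ZMod p) H) V) V < δ →
      ∀ v : Fin δ → V,
        (Nat.card (Module.End (MonoidAlgebra (ZMod p) H) V) ^
            (δ - Module.finrank (Module.End (MonoidAlgebra (ZMod p) H) V) V) - 1) /
          (Nat.card (Module.End (MonoidAlgebra (ZMod p) H) V) - 1) ≤
        Nat.card {W : Submodule (MonoidAlgebra (ZMod p) H) (Fin δ → V) //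
          IsCoatom W ∧ v ∈ W}) := by
  refine ⟨exists_span_singleton_pi_linearEquiv, fun _ v => ?_⟩
  simpa [finrank_pi_linearMap_eq] using
    pow_sub_one_div_le_natCard_isCoatom_mem (R := MonoidAlgebra (ZMod p) H) (V := V) v

/-- Let `V` be an irreducible `𝔽ₚH`-module (`H` a finite group), `F = End_H(V)`,
`q = |F|`, `r = dim_F V`.  Then the `H`-submodule of `V^δ` generated by any single
element is isomorphic to `V^k` for some `k ≤ r`; consequently, if `δ > r`, then for any
`v ∈ V^δ` there are at least `(q^{δ-r} - 1)/(q - 1)` maximal `H`-submodules of `V^δ`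
containing `v`. -/
theorem stmt16 (p : ℕ) [Fact p.Prime] (H : Type) [Group H] [Finite H]
    (V : Type) [AddCommGroup V] [Finite V]
    [Module (MonoidAlgebra (ZMod p) H) V]
    [IsSimpleModule (MonoidAlgebra (ZMod p) H) V]
    (δ : ℕ) :
    (∀ x : Fin δ → V,
      ∃ k ≤ Module.finrank (Module.End (MonoidAlgebra (ZMod p) H) V) V,
        Nonempty ((Submodule.span (MonoidAlgebra (ZMod p) H) {x} :
            Submodule (MonoidAlgebra (ZMod p) H) (Fin δ → V)) ≃ₗ[MonoidAlgebra (ZMod p) H]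
          (Fin k → V))) ∧
    (Module.finrank (Module.End (MonoidAlgebra (ZMod p) H) V) V < δ →
      ∀ v : Fin δ → V,
        (Nat.card (Module.End (MonoidAlgebra (ZMod p) H) V) ^
            (δ - Module.finrank (Module.End (MonoidAlgebra (ZMod p) H) V) V) - 1) /
          (Nat.card (Module.End (MonoidAlgebra (ZMod p) H) V) - 1) ≤
        Nat.card {W : Submodule (MonoidAlgebra (ZMod p) H) (Fin δ → V) //
          IsCoatom W ∧ v ∈ W}) :=
  stmt16_general p H V δ
end
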